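/- Let V ⊂ {(r,z) : r ≥ 0} ⊂ ℝ² be a bounded open set whose closure contains the origin and ρ(r,z) = √(r²+z²). For every integer m ≥ 0, real a, and every sufficiently smooth function v for which the right side is finite, ‖v‖²_{K^m_{a,1}(V)} := Σ_{|α| ≤ m} ∫_V ρ^{2(|α|-a)}(∂^α v)² r dr dz ≤ C Σ_{l ≤ m} |ρ^{-a+l} v|²_{H^l_1(V)}, where |w|²_{H^l_1(V)} = Σ_{|α| = l} ∫_V (∂^α w)² r dr dz and C depends only on m, a, and the diameter of V. -/

import Mathlib

open MeasureTheory

noncomputable section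

abbrev P2 := ℝ × ℝ

def rho2 (p : P2) : ℝ := Real.sqrt (p.1 ^ 2 + p.2 ^ 2)

def pdr (f : P2 → ℝ) : P2 → ℝ := fun p => fderiv ℝ f p (1, 0)
def pdz (f : P2 → ℝ) : P2 → ℝ := fun p => fderiv ℝ f p (0, 1)

def D2 (α : ℕ × ℕ) (f : P2 → ℝ) : P2 → ℝ := pdr^[α.1] (pdz^[α.2] f)

def wt2 (α : ℕ × ℕ) : ℕ := α.1 + α.2

def idx2 (m : ℕ) : Finset (ℕ × ℕ) :=
  ((Finset.range (m+1)) ×ˢ (Finset.range (m+1))).filter fun α => wt2 α ≤ m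

/-- Multi-indices with |α| = l. -/
def idx2e (l : ℕ) : Finset (ℕ × ℕ) :=
  ((Finset.range (l+1)) ×ˢ (Finset.range (l+1))).filter fun α => wt2 α = l

/-- ‖v‖²_{K^m_{a,1}(V)} = Σ_{|α|≤m} ∫_V ρ^{2(|α|-a)} (∂^α v)² r dr dz. -/
def K2 (V : Set P2) (m : ℕ) (a : ℝ) (v : P2 → ℝ) : ℝ :=
  ∑ α ∈ idx2 m, ∫ p in V, rho2 p ^ (2 * ((wt2 α : ℝ) - a)) * (D2 α v p) ^ 2 * p.1

/-- |w|²_{H^l_1(V)} = Σ_{|α|=l} ∫_V (∂^α w)² r dr dz. -/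
def S21 (V : Set P2) (l : ℕ) (w : P2 → ℝ) : ℝ :=
  ∑ α ∈ idx2e l, ∫ p in V, (D2 α w p) ^ 2 * p.1

/-!
An open subset of the closed half-plane `r ≥ 0` avoids the origin, and there `ρ^σ` is smooth and
homogeneous of degree `σ`. A derivative of a weight homogeneous of degree `s` is homogeneous of
degree `s - 1`, and a weight of degree `s` is bounded by `C ρ^s` (compactness of the unit circle).
The Leibniz rule thus writes `∂^α (ρ^(|α| - a) v) = ρ^(|α| - a) ∂^α v + ∑_{|β| < |α|} w_β ∂^β v`
with `|w_β| ≤ C ρ^(|β| - |α|)`, and induction on `|α|` bounds `ρ^(|α| - a) |∂^α v|` pointwise by a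
multiple of `∑_{l ≤ m} ∑_{|β| = l} |∂^β (ρ^(l - a) v)|`. Squaring (Cauchy–Schwarz) and integrating
against `r dr dz` gives the estimate.
-/

open Set Filter Topology
open scoped ContDiff

lemma rho2_nonneg (p : P2) : 0 ≤ rho2 p := Real.sqrt_nonneg _

lemma rho2_pos {p : P2} (hp : p ≠ 0) : 0 < rho2 p := by
  have : p.1 ≠ 0 ∨ p.2 ≠ 0 := by
    by_contra! h
    exact hp (Prod.ext h.1 h.2)
  exact Real.sqrt_pos.2 (by rcases this with h | h <;> positivity)

lemma rho2_smul {t : ℝ} (ht : 0 ≤ t) (p : P2) : rho2 (t • p) = t * rho2 p := by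
  simp only [rho2, Prod.smul_fst, Prod.smul_snd, smul_eq_mul]
  rw [show (t * p.1) ^ 2 + (t * p.2) ^ 2 = t ^ 2 * (p.1 ^ 2 + p.2 ^ 2) by ring,
    Real.sqrt_mul (sq_nonneg t), Real.sqrt_sq ht]

lemma continuous_rho2 : Continuous rho2 := by
  unfold rho2; fun_prop

lemma norm_le_rho2 (p : P2) : ‖p‖ ≤ rho2 p := by
  refine max_le ?_ ?_ <;> rw [Real.norm_eq_abs, ← Real.sqrt_sq_eq_abs] <;>
    exact Real.sqrt_le_sqrt (by nlinarith [sq_nonneg p.1, sq_nonneg p.2])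

lemma isCompact_rho2_eq_one : IsCompact {p : P2 | rho2 p = 1} :=
  Metric.isCompact_of_isClosed_isBounded (isClosed_eq continuous_rho2 continuous_const)
    ((Metric.isBounded_closedBall (x := 0) (r := 1)).subset fun p (hp : rho2 p = 1) =>
      mem_closedBall_zero_iff.2 (hp ▸ norm_le_rho2 p))

lemma contDiffOn_rho2_rpow (s : ℝ) : ContDiffOn ℝ ∞ (fun p => rho2 p ^ s) {0}ᶜ := fun _ hp =>
  (((contDiffAt_fst.pow 2).add (contDiffAt_snd.pow 2)).sqrt
    (Real.sqrt_pos.1 (rho2_pos hp)).ne').rpow_const_of_ne (rho2_pos hp).ne' |>.contDiffWithinAt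

def IsHomogeneousWeight (s : ℝ) (w : P2 → ℝ) : Prop :=
  ContDiffOn ℝ ∞ w {0}ᶜ ∧ ∀ t : ℝ, 0 < t → ∀ p : P2, p ≠ 0 → w (t • p) = t ^ s * w p

lemma isHomogeneousWeight_rho2_rpow (s : ℝ) : IsHomogeneousWeight s fun p => rho2 p ^ s :=
  ⟨contDiffOn_rho2_rpow s, fun t ht p _ => by
    show rho2 (t • p) ^ s = t ^ s * rho2 p ^ s
    rw [rho2_smul ht.le, Real.mul_rpow ht.le (rho2_nonneg p)]⟩

lemma contDiffOn_fderiv_apply {E : Type*} [NormedAddCommGroup E] [NormedSpace ℝ E] {V : Set E}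
    (hV : IsOpen V) {f : E → ℝ} (hf : ContDiffOn ℝ ∞ f V) (e : E) :
    ContDiffOn ℝ ∞ (fun p => fderiv ℝ f p e) V :=
  (hf.fderiv_of_isOpen hV (by simp)).clm_apply contDiffOn_const

lemma fderiv_mul_add_apply {E : Type*} [NormedAddCommGroup E] [NormedSpace ℝ E] {f g h : E → ℝ}
    {x : E} (hf : DifferentiableAt ℝ f x) (hg : DifferentiableAt ℝ g x)
    (hh : DifferentiableAt ℝ h x) (e : E) :
    fderiv ℝ (fun y => f y * g y + h y) x e
      = fderiv ℝ f x e * g x + f x * fderiv ℝ g x e + fderiv ℝ h x e := by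
  rw [fderiv_fun_add (f := fun y => f y * g y) (hf.mul hg) hh, fderiv_fun_mul hf hg]
  simp only [add_apply, smul_apply, smul_eq_mul]
  ring

lemma fderiv_fderiv_apply_comm {E : Type*} [NormedAddCommGroup E] [NormedSpace ℝ E] {f : E → ℝ}
    {x : E} (hf : ContDiffAt ℝ 2 f x) (u v : E) :
    fderiv ℝ (fun y => fderiv ℝ f y u) x v = fderiv ℝ (fun y => fderiv ℝ f y v) x u := by
  have hdiff : DifferentiableAt ℝ (fderiv ℝ f) x :=
    (hf.fderiv_right (m := 1) le_rfl).differentiableAt one_ne_zero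
  rw [fderiv_clm_apply hdiff (differentiableAt_const u),
    fderiv_clm_apply hdiff (differentiableAt_const v)]
  simpa using hf.isSymmSndFDerivAt (by simp) v u

namespace IsHomogeneousWeight

variable {s : ℝ} {w : P2 → ℝ}

lemma differentiableAt (hw : IsHomogeneousWeight s w) {p : P2} (hp : p ≠ 0) :
    DifferentiableAt ℝ w p :=
  (hw.1.contDiffAt (isOpen_compl_singleton.mem_nhds hp)).differentiableAt (by simp)

lemma fderiv_apply (hw : IsHomogeneousWeight s w) (e : P2) :
    IsHomogeneousWeight (s - 1) fun p => fderiv ℝ w p e := by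
  refine ⟨contDiffOn_fderiv_apply isOpen_compl_singleton hw.1 e, fun t ht p hp => ?_⟩
  have hscaled : (fun q => w (t • q)) =ᶠ[𝓝 p] fun q => t ^ s * w q :=
    eventually_of_mem (isOpen_compl_singleton.mem_nhds hp) fun q hq => hw.2 t ht q hq
  have hchain : HasFDerivAt (fun q => w (t • q))
      ((fderiv ℝ w (t • p)).comp (t • ContinuousLinearMap.id ℝ P2)) p :=
    (hw.differentiableAt (smul_ne_zero ht.ne' hp)).hasFDerivAt.comp p
      ((hasFDerivAt_id p).const_smul t)
  have key : t * fderiv ℝ w (t • p) e = t ^ s * fderiv ℝ w p e := by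
    have := hchain.fderiv.symm.trans
      (hscaled.fderiv_eq.trans (fderiv_const_mul (hw.differentiableAt hp) _))
    simpa using congrArg (· e) this
  rw [Real.rpow_sub_one ht.ne', div_mul_eq_mul_div, ← key]
  field_simp

lemma exists_abs_le (hw : IsHomogeneousWeight s w) :
    ∃ C, 0 ≤ C ∧ ∀ p : P2, p ≠ 0 → |w p| ≤ C * rho2 p ^ s := by
  have hS : {p : P2 | rho2 p = 1} ⊆ {0}ᶜ := fun p hp (h0 : p = 0) => by simp [h0, rho2] at hp
  obtain ⟨C, hC⟩ := isCompact_rho2_eq_one.exists_bound_of_continuousOn (hw.1.continuousOn.mono hS)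
  refine ⟨max C 0, le_max_right _ _, fun p hp => ?_⟩
  have ht := rho2_pos hp
  have hunit : rho2 ((rho2 p)⁻¹ • p) = 1 := by
    rw [rho2_smul (inv_nonneg.2 ht.le), inv_mul_cancel₀ ht.ne']
  have hscale : w p = rho2 p ^ s * w ((rho2 p)⁻¹ • p) := by
    rw [← hw.2 _ ht _ (smul_ne_zero (inv_ne_zero ht.ne') hp), smul_inv_smul₀ ht.ne']
  rw [hscale, abs_mul, abs_of_pos (Real.rpow_pos_of_pos ht s), mul_comm]
  gcongr
  exact (hC _ hunit).trans (le_max_left _ _)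

end IsHomogeneousWeight

lemma wt2_add (α β : ℕ × ℕ) : wt2 (α + β) = wt2 α + wt2 β := by
  simp only [wt2, Prod.fst_add, Prod.snd_add]; ring

section Derivatives

variable {V : Set P2}

lemma contDiffOn_D2 (hVo : IsOpen V) {f : P2 → ℝ} (hf : ContDiffOn ℝ ∞ f V) (α : ℕ × ℕ) :
    ContDiffOn ℝ ∞ (D2 α f) V :=
  Function.Iterate.rec (fun g => ContDiffOn ℝ ∞ g V)
    (Function.Iterate.rec (fun g => ContDiffOn ℝ ∞ g V) hf
      (fun _ hg => contDiffOn_fderiv_apply hVo hg _) α.2)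
    (fun _ hg => contDiffOn_fderiv_apply hVo hg _) α.1

lemma D2_add_fst (α : ℕ × ℕ) (f : P2 → ℝ) : D2 (α + (1, 0)) f = pdr (D2 α f) :=
  Function.iterate_succ_apply' pdr α.1 _

lemma eqOn_pdz_D2 (hVo : IsOpen V) {f : P2 → ℝ} (hf : ContDiffOn ℝ ∞ f V) (α : ℕ × ℕ) :
    EqOn (pdz (D2 α f)) (D2 (α + (0, 1)) f) V := by
  obtain ⟨i, j⟩ := α
  induction i with
  | zero => exact fun p _ => (congrFun (Function.iterate_succ_apply' pdz j f) p).symm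
  | succ i ih =>
    intro p hp
    have hsmooth : ContDiffAt ℝ 2 (D2 (i, j) f) p :=
      ((contDiffOn_D2 hVo hf (i, j)).contDiffAt (hVo.mem_nhds hp)).of_le
        (WithTop.coe_le_coe.2 le_top)
    calc pdz (D2 ((i, j) + (1, 0)) f) p = pdz (pdr (D2 (i, j) f)) p := by rw [D2_add_fst]
      _ = pdr (pdz (D2 (i, j) f)) p := fderiv_fderiv_apply_comm hsmooth _ _
      _ = pdr (D2 ((i, j) + (0, 1)) f) p := by
        simp only [pdr]; rw [(ih.eventuallyEq_of_mem (hVo.mem_nhds hp)).fderiv_eq]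
      _ = D2 ((i + 1, j) + (0, 1)) f p := by rw [← D2_add_fst]; rfl

end Derivatives

/-- Operators `v ↦ ∑ w_β ∂^β v` with `|β| < k` and `w_β` homogeneous of degree `s + |β|`; for
`s = -a` each term is dominated by a multiple of `ρ^(|β| - a) |∂^β v|`. -/
inductive IsLowerOrder (s : ℝ) (k : ℕ) : ((P2 → ℝ) → P2 → ℝ) → Prop
  | zero : IsLowerOrder s k fun _ _ => 0
  | add_term {L : (P2 → ℝ) → P2 → ℝ} {w : P2 → ℝ} {β : ℕ × ℕ} :
      IsHomogeneousWeight (s + wt2 β) w → wt2 β < k → IsLowerOrder s k L →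
      IsLowerOrder s k fun v p => w p * D2 β v p + L v p

namespace IsLowerOrder

variable {V : Set P2} {s : ℝ} {k : ℕ} {L : (P2 → ℝ) → P2 → ℝ}

lemma contDiffOn (hL : IsLowerOrder s k L) (hVo : IsOpen V) (hV0 : V ⊆ {0}ᶜ) {v : P2 → ℝ}
    (hv : ContDiffOn ℝ ∞ v V) : ContDiffOn ℝ ∞ (L v) V := by
  induction hL with
  | zero => exact contDiffOn_const
  | add_term hw _ _ ih => exact ((hw.1.mono hV0).mul (contDiffOn_D2 hVo hv _)).add ih

lemma exists_fderiv_apply_eqOn (hL : IsLowerOrder s k L) (hVo : IsOpen V) (hV0 : V ⊆ {0}ᶜ)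
    {e : P2} {δ : ℕ × ℕ} (hδ : wt2 δ = 1)
    (hshift : ∀ v, ContDiffOn ℝ ∞ v V → ∀ β,
      EqOn (fun p => fderiv ℝ (D2 β v) p e) (D2 (β + δ) v) V) :
    ∃ L', IsLowerOrder (s - 1) (k + 1) L' ∧
      ∀ v, ContDiffOn ℝ ∞ v V → EqOn (fun p => fderiv ℝ (L v) p e) (L' v) V := by
  induction hL with
  | zero => exact ⟨_, .zero, fun v _ p _ => by simp⟩
  | @add_term L w β hw hβ hL ih =>
    obtain ⟨L', hL', hderiv⟩ := ih
    refine ⟨fun v p => fderiv ℝ w p e * D2 β v p + (w p * D2 (β + δ) v p + L' v p),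
      .add_term ?_ (by omega) (.add_term ?_ (by rw [wt2_add, hδ]; omega) hL'),
      fun v hv p hp => ?_⟩
    · convert hw.fderiv_apply e using 1; ring
    · convert hw using 1; rw [wt2_add, hδ]; push_cast; ring
    · have hD := (contDiffOn_D2 hVo hv β).differentiableOn (by simp) p hp
      have hLv := (hL.contDiffOn hVo hV0 hv).differentiableOn (by simp) p hp
      beta_reduce
      rw [fderiv_mul_add_apply (hw.differentiableAt (hV0 hp))
        (hD.differentiableAt (hVo.mem_nhds hp)) (hLv.differentiableAt (hVo.mem_nhds hp)),
        ← hshift v hv β hp, ← hderiv v hv hp]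
      ring

lemma exists_abs_le (hL : IsLowerOrder s k L) (hV0 : V ⊆ {0}ᶜ) {B : (P2 → ℝ) → P2 → ℝ}
    (hB : ∀ β, wt2 β < k → ∃ C, ∀ v, ContDiffOn ℝ ∞ v V → ∀ p ∈ V,
      rho2 p ^ (s + wt2 β) * |D2 β v p| ≤ C * B v p) :
    ∃ C, ∀ v, ContDiffOn ℝ ∞ v V → ∀ p ∈ V, |L v p| ≤ C * B v p := by
  induction hL with
  | zero => exact ⟨0, fun _ _ _ _ => by simp⟩
  | @add_term L w β hw hβ _ ih =>
    obtain ⟨Cw, hCw, hw_le⟩ := hw.exists_abs_le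
    obtain ⟨Cβ, hCβ⟩ := hB β hβ
    obtain ⟨CL, hCL⟩ := ih
    refine ⟨Cw * Cβ + CL, fun v hv p hp => ?_⟩
    calc |w p * D2 β v p + L v p| ≤ |w p| * |D2 β v p| + |L v p| := by
          rw [← abs_mul]; exact abs_add_le _ _
      _ ≤ Cw * rho2 p ^ (s + wt2 β) * |D2 β v p| + CL * B v p := by
          gcongr
          · exact hw_le p (hV0 hp)
          · exact hCL v hv p hp
      _ ≤ Cw * (Cβ * B v p) + CL * B v p := by
          rw [mul_assoc]; exact add_le_add_left (mul_le_mul_of_nonneg_left (hCβ v hv p hp) hCw) _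
      _ = (Cw * Cβ + CL) * B v p := by ring

end IsLowerOrder

section Leibniz

variable {V : Set P2} {σ : ℝ} {w : P2 → ℝ}

lemma exists_D2_mul_eqOn_add_of_shift (hVo : IsOpen V) (hV0 : V ⊆ {0}ᶜ)
    (hw : IsHomogeneousWeight σ w) {e : P2} {δ : ℕ × ℕ} (hδ : wt2 δ = 1)
    (hshift : ∀ v, ContDiffOn ℝ ∞ v V → ∀ β,
      EqOn (fun p => fderiv ℝ (D2 β v) p e) (D2 (β + δ) v) V) {α : ℕ × ℕ}
    (hα : ∃ L, IsLowerOrder (σ - wt2 α) (wt2 α) L ∧ ∀ v, ContDiffOn ℝ ∞ v V →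
      EqOn (D2 α fun q => w q * v q) (fun p => w p * D2 α v p + L v p) V) :
    ∃ L, IsLowerOrder (σ - wt2 (α + δ)) (wt2 (α + δ)) L ∧ ∀ v, ContDiffOn ℝ ∞ v V →
      EqOn (D2 (α + δ) fun q => w q * v q) (fun p => w p * D2 (α + δ) v p + L v p) V := by
  obtain ⟨L, hL, hexp⟩ := hα
  obtain ⟨L', hL', hderiv⟩ := hL.exists_fderiv_apply_eqOn hVo hV0 hδ hshift
  rw [wt2_add, hδ]
  refine ⟨fun v p => fderiv ℝ w p e * D2 α v p + L' v p, .add_term ?_ (Nat.lt_succ_self _) ?_,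
    fun v hv p hp => ?_⟩
  · convert hw.fderiv_apply e using 1; push_cast; ring
  · convert hL' using 1; push_cast; ring
  · have hwv : ContDiffOn ℝ ∞ (fun q => w q * v q) V := (hw.1.mono hV0).mul hv
    have hD := (contDiffOn_D2 hVo hv α).differentiableOn (by simp) p hp
    have hLv := (hL.contDiffOn hVo hV0 hv).differentiableOn (by simp) p hp
    beta_reduce
    rw [← hshift _ hwv α hp, ← hshift v hv α hp, ← hderiv v hv hp]
    beta_reduce
    rw [((hexp v hv).eventuallyEq_of_mem (hVo.mem_nhds hp)).fderiv_eq,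
      fderiv_mul_add_apply (hw.differentiableAt (hV0 hp))
        (hD.differentiableAt (hVo.mem_nhds hp)) (hLv.differentiableAt (hVo.mem_nhds hp))]
    ring

theorem exists_D2_mul_eqOn_add (hVo : IsOpen V) (hV0 : V ⊆ {0}ᶜ)
    (hw : IsHomogeneousWeight σ w) (α : ℕ × ℕ) :
    ∃ L, IsLowerOrder (σ - wt2 α) (wt2 α) L ∧ ∀ v, ContDiffOn ℝ ∞ v V →
      EqOn (D2 α fun q => w q * v q) (fun p => w p * D2 α v p + L v p) V := by
  obtain ⟨i, j⟩ := α
  induction i with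
  | zero =>
    induction j with
    | zero => exact ⟨_, .zero, fun v _ p _ => (add_zero _).symm⟩
    | succ j ih =>
      exact exists_D2_mul_eqOn_add_of_shift (δ := (0, 1)) hVo hV0 hw rfl
        (fun _ hv β => eqOn_pdz_D2 hVo hv β) ih
  | succ i ih =>
    exact exists_D2_mul_eqOn_add_of_shift (δ := (1, 0)) hVo hV0 hw rfl
      (fun v _ β _ _ => by rw [D2_add_fst]; rfl) ih

end Leibniz

def jetIdx (m : ℕ) : Finset (Σ _ : ℕ, ℕ × ℕ) := (Finset.range (m + 1)).sigma idx2e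

def weightedJet (a : ℝ) (v : P2 → ℝ) (x : Σ _ : ℕ, ℕ × ℕ) : P2 → ℝ :=
  D2 x.2 fun q => rho2 q ^ ((x.1 : ℝ) - a) * v q

lemma mem_jetIdx {m l : ℕ} {β : ℕ × ℕ} (hl : l ≤ m) (hβ : wt2 β = l) : ⟨l, β⟩ ∈ jetIdx m := by
  refine Finset.mem_sigma.2
    ⟨Finset.mem_range.2 (Nat.lt_succ_of_le hl), Finset.mem_filter.2 ⟨?_, hβ⟩⟩
  simp only [wt2] at hβ
  simp only [Finset.mem_product, Finset.mem_range]
  omega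

section Estimates

variable {V : Set P2}

theorem exists_rpow_mul_abs_D2_le (hVo : IsOpen V) (hV0 : V ⊆ {0}ᶜ) (a : ℝ) {m : ℕ}
    (α : ℕ × ℕ) (hα : wt2 α ≤ m) :
    ∃ C, ∀ v, ContDiffOn ℝ ∞ v V → ∀ p ∈ V,
      rho2 p ^ ((wt2 α : ℝ) - a) * |D2 α v p| ≤ C * ∑ x ∈ jetIdx m, |weightedJet a v x p| := by
  induction hk : wt2 α using Nat.strong_induction_on generalizing α with
  | _ k ih =>
  obtain ⟨L, hL, hexp⟩ :=
    exists_D2_mul_eqOn_add hVo hV0 (isHomogeneousWeight_rho2_rpow ((k : ℝ) - a)) α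
  rw [hk] at hL
  obtain ⟨C, hC⟩ := hL.exists_abs_le hV0 fun β hβ => by
    obtain ⟨C, hC⟩ := ih _ hβ β (by omega) rfl
    exact ⟨C, fun v hv p hp => by convert hC v hv p hp using 3; ring⟩
  refine ⟨1 + C, fun v hv p hp => ?_⟩
  have hsplit : rho2 p ^ ((k : ℝ) - a) * D2 α v p = weightedJet a v ⟨k, α⟩ p - L v p := by
    rw [weightedJet, hexp v hv hp]; ring
  calc rho2 p ^ ((k : ℝ) - a) * |D2 α v p| = |weightedJet a v ⟨k, α⟩ p - L v p| := by
        rw [← hsplit, abs_mul, abs_of_nonneg (Real.rpow_nonneg (rho2_nonneg p) _)]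
    _ ≤ |weightedJet a v ⟨k, α⟩ p| + |L v p| := abs_sub _ _
    _ ≤ (∑ x ∈ jetIdx m, |weightedJet a v x p|) + C * ∑ x ∈ jetIdx m, |weightedJet a v x p| :=
        add_le_add
          (Finset.single_le_sum (f := fun x => |weightedJet a v x p|)
            (fun _ _ => abs_nonneg _) (mem_jetIdx (hk ▸ hα) hk))
          (hC v hv p hp)
    _ = (1 + C) * ∑ x ∈ jetIdx m, |weightedJet a v x p| := by ring

theorem exists_rpow_mul_sq_D2_le (hVo : IsOpen V) (hV0 : V ⊆ {0}ᶜ) (m : ℕ) (a : ℝ) :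
    ∃ C > 0, ∀ α ∈ idx2 m, ∀ v, ContDiffOn ℝ ∞ v V → ∀ p ∈ V,
      rho2 p ^ (2 * ((wt2 α : ℝ) - a)) * D2 α v p ^ 2
        ≤ C * ∑ x ∈ jetIdx m, weightedJet a v x p ^ 2 := by
  have hlarge : ∀ α ∈ idx2 m, ∀ᶠ C in atTop, ∀ v, ContDiffOn ℝ ∞ v V → ∀ p ∈ V,
      rho2 p ^ ((wt2 α : ℝ) - a) * |D2 α v p| ≤ C * ∑ x ∈ jetIdx m, |weightedJet a v x p| := by
    intro α hα
    obtain ⟨C₀, hC₀⟩ := exists_rpow_mul_abs_D2_le hVo hV0 a α (Finset.mem_filter.1 hα).2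
    filter_upwards [eventually_ge_atTop C₀] with C hC v hv p hp
    exact (hC₀ v hv p hp).trans
      (mul_le_mul_of_nonneg_right hC (Finset.sum_nonneg fun _ _ => abs_nonneg _))
  obtain ⟨C, hCpos, hC⟩ :=
    ((eventually_gt_atTop 0).and ((eventually_all_finset _).2 hlarge)).exists
  have hcard : 0 < ((jetIdx m).card : ℝ) :=
    Nat.cast_pos.2 (Finset.card_pos.2 ⟨_, mem_jetIdx (Nat.zero_le m) (β := (0, 0)) rfl⟩)
  refine ⟨C ^ 2 * (jetIdx m).card, by positivity, fun α hα v hv p hp => ?_⟩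
  calc rho2 p ^ (2 * ((wt2 α : ℝ) - a)) * D2 α v p ^ 2
      = (rho2 p ^ ((wt2 α : ℝ) - a) * |D2 α v p|) ^ 2 := by
        rw [mul_pow, sq_abs, mul_comm 2, Real.rpow_mul (rho2_nonneg p), Real.rpow_two]
    _ ≤ (C * ∑ x ∈ jetIdx m, |weightedJet a v x p|) ^ 2 :=
        pow_le_pow_left₀ (by positivity [Real.rpow_nonneg (rho2_nonneg p) ((wt2 α : ℝ) - a)])
          (hC α hα v hv p hp) 2
    _ ≤ C ^ 2 * ((jetIdx m).card * ∑ x ∈ jetIdx m, |weightedJet a v x p| ^ 2) := by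
        rw [mul_pow]; gcongr; exact sq_sum_le_card_mul_sum_sq
    _ = C ^ 2 * (jetIdx m).card * ∑ x ∈ jetIdx m, weightedJet a v x p ^ 2 := by
        simp only [sq_abs]; ring

end Estimates

lemma integral_sum_weightedJet_sq_mul_fst {V : Set P2} {m : ℕ} {a : ℝ} {v : P2 → ℝ}
    (hInt : ∀ x ∈ jetIdx m,
      Integrable (fun p => weightedJet a v x p ^ 2 * p.1) (volume.restrict V)) :
    ∫ p in V, (∑ x ∈ jetIdx m, weightedJet a v x p ^ 2) * p.1
      = ∑ l ∈ Finset.range (m + 1), S21 V l fun q => rho2 q ^ ((l : ℝ) - a) * v q := by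
  simp_rw [Finset.sum_mul]
  rw [integral_finsetSum _ hInt, jetIdx, Finset.sum_sigma]
  rfl

lemma IsOpen.subset_fst_pos {V : Set P2} (hVo : IsOpen V) (hVr : V ⊆ {p : P2 | 0 ≤ p.1}) :
    V ⊆ {p : P2 | 0 < p.1} := by
  have h := interior_mono hVr
  rwa [hVo.interior_eq, show {p : P2 | 0 ≤ p.1} = Prod.fst ⁻¹' Ici 0 from rfl,
    ← isOpenMap_fst.preimage_interior_eq_interior_preimage continuous_fst, interior_Ici] at h

theorem stmt_6_general (V : Set P2) (hVo : IsOpen V)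
    (hVr : V ⊆ {p : P2 | 0 ≤ p.1})
    (m : ℕ) (a : ℝ) :
    ∃ C > 0, ∀ v : P2 → ℝ, ContDiffOn ℝ (⊤ : ℕ∞) v V →
      (∀ l ≤ m, ∀ α ∈ idx2e l,
        Integrable (fun p => (D2 α (fun q => rho2 q ^ ((l : ℝ) - a) * v q) p) ^ 2 * p.1)
          (volume.restrict V)) →
      K2 V m a v
        ≤ C * ∑ l ∈ Finset.range (m+1),
            S21 V l (fun q => rho2 q ^ ((l : ℝ) - a) * v q) := by
  have hV0 : V ⊆ {0}ᶜ := fun p hp (h0 : p = 0) => by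
    simpa [h0] using hVo.subset_fst_pos hVr hp
  obtain ⟨C, hCpos, hC⟩ := exists_rpow_mul_sq_D2_le hVo hV0 m a
  have hcard : 0 < ((idx2 m).card : ℝ) :=
    Nat.cast_pos.2 (Finset.card_pos.2 ⟨(0, 0), Finset.mem_filter.2 ⟨by simp, by simp [wt2]⟩⟩)
  refine ⟨(idx2 m).card * C, by positivity, fun v hv hInt => ?_⟩
  have hInt' : ∀ x ∈ jetIdx m,
      Integrable (fun p => weightedJet a v x p ^ 2 * p.1) (volume.restrict V) := fun x hx => by
    obtain ⟨hl, hβ⟩ := Finset.mem_sigma.1 hx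
    exact hInt x.1 (Nat.lt_succ_iff.1 (Finset.mem_range.1 hl)) x.2 hβ
  have hdom : Integrable (fun p => C * ((∑ x ∈ jetIdx m, weightedJet a v x p ^ 2) * p.1))
      (volume.restrict V) := by
    simp_rw [Finset.sum_mul]
    exact (integrable_finsetSum _ hInt').const_mul C
  calc K2 V m a v
      ≤ ∑ _α ∈ idx2 m, ∫ p in V, C * ((∑ x ∈ jetIdx m, weightedJet a v x p ^ 2) * p.1) :=
        Finset.sum_le_sum fun α hα => integral_mono_of_nonneg
          (ae_restrict_of_forall_mem hVo.measurableSet fun p hp =>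
            mul_nonneg (mul_nonneg (Real.rpow_nonneg (rho2_nonneg p) _) (sq_nonneg _)) (hVr hp))
          hdom
          (ae_restrict_of_forall_mem hVo.measurableSet fun p hp =>
            (mul_le_mul_of_nonneg_right (hC α hα v hv p hp) (hVr hp)).trans_eq (mul_assoc _ _ _))
    _ = (idx2 m).card * C * ∑ l ∈ Finset.range (m + 1),
          S21 V l fun q => rho2 q ^ ((l : ℝ) - a) * v q := by
        rw [Finset.sum_const, integral_const_mul, integral_sum_weightedJet_sq_mul_fst hInt',
          nsmul_eq_mul, mul_assoc]

/-- ‖v‖²_{K^m_{a,1}(V)} ≤ C Σ_{l≤m} |ρ^{-a+l} v|²_{H^l_1(V)},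
C depending only on m, a, V. -/
theorem stmt_6 (V : Set P2) (hVo : IsOpen V) (hVb : Bornology.IsBounded V)
    (hVr : V ⊆ {p : P2 | 0 ≤ p.1}) (h0 : ((0, 0) : P2) ∈ closure V)
    (m : ℕ) (a : ℝ) :
    ∃ C > 0, ∀ v : P2 → ℝ, ContDiffOn ℝ (⊤ : ℕ∞) v V →
      (∀ l ≤ m, ∀ α ∈ idx2e l,
        Integrable (fun p => (D2 α (fun q => rho2 q ^ ((l : ℝ) - a) * v q) p) ^ 2 * p.1)
          (volume.restrict V)) →
      K2 V m a v
        ≤ C * ∑ l ∈ Finset.range (m+1),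
            S21 V l (fun q => rho2 q ^ ((l : ℝ) - a) * v q) :=
  stmt_6_general V hVo hVr m a
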